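/- Let (Ω, μ) be a measure space, k : Ω × Ω → ℝ a measurable kernel with k(x, y) ≥ 0 for all (x, y), satisfying ∫_Ω k(x, y) dμ(y) = 1 for μ-a.e. x (filter property) and ∫_Ω k(x, y) dμ(x) = 1 for μ-a.e. y (conservativity). Let U : ℝ → ℝ be convex and continuous, and let u : Ω → ℝ be such that u, U ∘ u, Υu and U ∘ (Υu) are integrable and the relevant double integrals are finite, where (Υu)(x) = ∫_Ω k(x, y) u(y) dμ(y). Then the filter dissipates entropy: ∫_Ω U((Υu)(x)) dμ(x) ≤ ∫_Ω U(u(x)) dμ(x). -/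
import Mathlib

open MeasureTheory
open scoped NNReal ENNReal

/-- **A positive conservative filter dissipates entropy.**
If the kernel `k` is nonnegative, has `∫ y, k x y dμ(y) = 1` for a.e. `x` (filter)
and `∫ x, k x y dμ(x) = 1` for a.e. `y` (conservative), and `U : ℝ → ℝ` is convex and
continuous, then `∫ U(Υu) dμ ≤ ∫ U(u) dμ` for `(Υu)(x) = ∫ y, k x y * u y dμ(y)`,
provided all the relevant integrals are finite. -/
theorem positive_conservative_filter_dissipates_entropy
    {Ω : Type*} [MeasurableSpace Ω] (μ : Measure Ω) [SigmaFinite μ]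
    (k : Ω × Ω → ℝ) (u : Ω → ℝ) (U : ℝ → ℝ)
    (hk : Measurable k)
    (hk_pos : ∀ x y : Ω, 0 ≤ k (x, y))
    (hfilter : ∀ᵐ x ∂μ, ∫ y, k (x, y) ∂μ = 1)
    (hcons : ∀ᵐ y ∂μ, ∫ x, k (x, y) ∂μ = 1)
    (hU_conv : ConvexOn ℝ Set.univ U)
    (hU_cont : Continuous U)
    (hu : Integrable u μ)
    (hUu : Integrable (fun x => U (u x)) μ)
    (hKu : Integrable (fun x => ∫ y, k (x, y) * u y ∂μ) μ)
    (hUKu : Integrable (fun x => U (∫ y, k (x, y) * u y ∂μ)) μ)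
    (hprod : Integrable (fun p : Ω × Ω => k p * u p.2) (μ.prod μ))
    (hprodU : Integrable (fun p : Ω × Ω => k p * U (u p.2)) (μ.prod μ)) :
    ∫ x, U (∫ y, k (x, y) * u y ∂μ) ∂μ ≤ ∫ x, U (u x) ∂μ := by
  have key : ∫ x, U (∫ y, k (x, y) * u y ∂μ) ∂μ ≤ ∫ x, ∫ y, k (x, y) * U (u y) ∂μ ∂μ := by
    apply integral_mono_ae hUKu hprodU.integral_prod_left
    filter_upwards [hfilter, hprod.prod_right_ae, hprodU.prod_right_ae] with x hx hix hiUx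
    -- `y ↦ k (x, y)` is integrable since its integral is `1 ≠ 0`
    have hki : Integrable (fun y => k (x, y)) μ := by
      by_contra h
      rw [integral_undef h] at hx
      norm_num at hx
    set f : Ω → ℝ≥0 := fun y => (k (x, y)).toNNReal with hf
    have hfm : Measurable f := (hk.comp measurable_prodMk_left).real_toNNReal
    set ν : Measure Ω := μ.withDensity (fun y => (f y : ℝ≥0∞)) with hν
    have hsmul : ∀ (g : Ω → ℝ), (fun y => f y • g y) = fun y => k (x, y) * g y := by
      intro g; funext y
      simp [hf, NNReal.smul_def, Real.coe_toNNReal _ (hk_pos x y)]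
    have hint : ∀ (g : Ω → ℝ), ∫ y, g y ∂ν = ∫ y, k (x, y) * g y ∂μ := by
      intro g
      rw [hν, integral_withDensity_eq_integral_smul hfm, hsmul]
    have hinteg : ∀ (g : Ω → ℝ), Integrable (fun y => k (x, y) * g y) μ →
        Integrable g ν := by
      intro g hg
      rw [hν, integrable_withDensity_iff_integrable_smul hfm, hsmul]
      exact hg
    have : IsProbabilityMeasure ν := by
      constructor
      rw [hν, withDensity_apply _ MeasurableSet.univ, Measure.restrict_univ]
      have hcoe : (fun y => (f y : ℝ≥0∞)) = fun y => ENNReal.ofReal (k (x, y)) := by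
        funext y; simp [hf, ENNReal.ofReal]
      rw [hcoe, ← ofReal_integral_eq_lintegral_ofReal hki
        (Filter.Eventually.of_forall (hk_pos x)), hx, ENNReal.ofReal_one]
    have jensen := hU_conv.map_integral_le (μ := ν) (f := u)
      hU_cont.continuousOn isClosed_univ
      (Filter.Eventually.of_forall fun _ => Set.mem_univ _)
      (hinteg u hix) (hinteg (fun t => U (u t)) hiUx)
    rwa [hint u, hint (fun t => U (u t))] at jensen
  refine key.trans (le_of_eq ?_)
  rw [integral_integral_swap (by exact hprodU)]
  refine integral_congr_ae ?_
  filter_upwards [hcons] with y hy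
  rw [integral_mul_const, hy, one_mul]
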